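/- Let (A_b, f_b) be the one-dimensional double extension of an abelian quadratic Lie algebra (A, f) by an f-skew-symmetric derivation d. Then A_b is 2-step nilpotent if and only if d ≠ 0 and d∘d = 0. -/
import Mathlib


open Module

variable {K A : Type*}

/-- The bracket of the one-dimensional double extension `A_b = Kb ⊕ A ⊕ Kβ` of `(A,f)`
by an `f`-skew-symmetric derivation `d`. -/
def odeBr [Field K] [LieRing A] [LieAlgebra K A]
    (f : A →ₗ[K] A →ₗ[K] K) (d : A →ₗ[K] A)
    (X Y : K × A × K) : K × A × K :=
  (0, X.1 • d Y.2.1 - Y.1 • d X.2.1 + ⁅X.2.1, Y.2.1⁆, f (d X.2.1) Y.2.1)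

/-- The one-dimensional double extension `A_b` of an abelian quadratic Lie algebra
`(A, f)` by an `f`-skew-symmetric derivation `d` is 2-step nilpotent if and only if
`d ≠ 0` and `d ∘ d = 0`. -/
theorem stmt5 [Field K] [CharZero K] [LieRing A] [LieAlgebra K A] [FiniteDimensional K A]
    (habelian : ∀ x y : A, ⁅x, y⁆ = 0)
    (f : A →ₗ[K] A →ₗ[K] K)
    (hsymm : ∀ x y, f x y = f y x)
    (hnd : ∀ x, (∀ y, f x y = 0) → x = 0)
    (hinv : ∀ x y z, f ⁅x, y⁆ z = f x ⁅y, z⁆)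
    (d : A →ₗ[K] A)
    (hder : ∀ x y : A, d ⁅x, y⁆ = ⁅d x, y⁆ + ⁅x, d y⁆)
    (hdskew : ∀ x y : A, f (d x) y + f x (d y) = 0) :
    ((∀ X Y Z : K × A × K, odeBr f d X (odeBr f d Y Z) = 0) ∧
     (∃ X Y : K × A × K, odeBr f d X Y ≠ 0))
    ↔
    (d ≠ 0 ∧ d ∘ₗ d = 0) := by
  constructor
  · rintro ⟨h1, X, Y, hXY⟩
    constructor
    · rintro rfl
      exact hXY (by simp [odeBr, habelian])
    · ext x
      have h := h1 (1, 0, 0) (1, 0, 0) (0, x, 0)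
      have h2 := congrArg (fun P : K × A × K => P.2.1) h
      simpa [odeBr, habelian] using h2
  · rintro ⟨hd, hdd⟩
    have hdd' : ∀ w : A, d (d w) = 0 := fun w =>
      congrFun (congrArg DFunLike.coe hdd) w
    have hfd : ∀ x w : A, f (d x) (d w) = 0 := by
      intro x w
      have := hdskew (d x) w
      rw [hdd'] at this
      simpa using this
    constructor
    · intro X Y Z
      simp [odeBr, habelian, Prod.ext_iff, map_sub, map_smul, hdd', hfd]
    · obtain ⟨x, hx⟩ := DFunLike.ne_iff.mp hd
      refine ⟨(1, 0, 0), (0, x, 0), fun h => hx ?_⟩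
      have := congrArg (fun P : K × A × K => P.2.1) h
      simpa [odeBr, habelian] using this
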